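/- Let L > 0, D > 0, b₂ ≥ 0, b₁ ∈ ℝ, and let w(t,x) be a smooth real-valued function on [0,∞) × [0,L] satisfying, for all t ≥ 0 and x ∈ [0,L], the free nonlinear cantilever equation w_tt + D w_xxxx + (b₁ − b₂‖w_x(t,·)‖²) w_xx = 0, together with the boundary conditions w(t,0) = w_x(t,0) = 0, w_xx(t,L) = 0 and D w_xxx(t,L) + (b₁ − b₂‖w_x(t,·)‖²) w_x(t,L) = 0 for all t ≥ 0. Then the nonlinear energy 𝓔(t) = (1/2)(D‖w_xx(t,·)‖² + ‖w_t(t,·)‖²) + (b₂/4)‖w_x(t,·)‖⁴ − (b₁/2)‖w_x(t,·)‖² is constant in time: 𝓔(t) = 𝓔(0) for all t ≥ 0. -/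

import Mathlib

open MeasureTheory intervalIntegral

/-- Partial derivative in time of `w(t,x)`. -/
noncomputable def pt (w : ℝ → ℝ → ℝ) : ℝ → ℝ → ℝ := fun t x => deriv (fun s => w s x) t

/-- Partial derivative in space of `w(t,x)`. -/
noncomputable def px (w : ℝ → ℝ → ℝ) : ℝ → ℝ → ℝ := fun t x => deriv (fun y => w t y) x

section Aux
open Function Set Metric

variable {u : ℝ → ℝ → ℝ}

lemma slice_x_diff (hu : ContDiff ℝ (⊤ : ℕ∞) (uncurry u)) (t x : ℝ) :
    DifferentiableAt ℝ (fun y => u t y) x :=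
  (hu.differentiable (by simp) (t, x)).comp x
    ((differentiableAt_const t).prodMk differentiableAt_id)

lemma slice_t_diff (hu : ContDiff ℝ (⊤ : ℕ∞) (uncurry u)) (t x : ℝ) :
    DifferentiableAt ℝ (fun s => u s x) t := by
  have := (hu.differentiable (by simp) (t, x)).comp t
    ((differentiableAt_id : DifferentiableAt ℝ id t).prodMk (differentiableAt_const x))
  exact this

lemma hasDerivAt_px (hu : ContDiff ℝ (⊤ : ℕ∞) (uncurry u)) (t x : ℝ) :
    HasDerivAt (fun y => u t y) (px u t x) x :=
  (slice_x_diff hu t x).hasDerivAt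

lemma hasDerivAt_pt (hu : ContDiff ℝ (⊤ : ℕ∞) (uncurry u)) (t x : ℝ) :
    HasDerivAt (fun s => u s x) (pt u t x) t :=
  (slice_t_diff hu t x).hasDerivAt

lemma cont_slice_x (hu : ContDiff ℝ (⊤ : ℕ∞) (uncurry u)) (t : ℝ) :
    Continuous fun x => u t x :=
  hu.continuous.comp (Continuous.prodMk_right t)

lemma px_eq_fderiv (hu : ContDiff ℝ (⊤ : ℕ∞) (uncurry u)) (t x : ℝ) :
    px u t x = fderiv ℝ (uncurry u) (t, x) (0, 1) := by
  have hg : HasDerivAt (fun y => ((t, y) : ℝ × ℝ)) ((0 : ℝ), (1 : ℝ)) x :=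
    (hasDerivAt_const x t).prodMk (hasDerivAt_id x)
  have h : HasDerivAt (fun y => u t y) (fderiv ℝ (uncurry u) (t, x) (0, 1)) x :=
    ((hu.differentiable (by simp) (t, x)).hasFDerivAt).comp_hasDerivAt x hg
  show deriv (fun y => u t y) x = _
  exact h.deriv

lemma pt_eq_fderiv (hu : ContDiff ℝ (⊤ : ℕ∞) (uncurry u)) (t x : ℝ) :
    pt u t x = fderiv ℝ (uncurry u) (t, x) (1, 0) := by
  have hg : HasDerivAt (fun s => ((s, x) : ℝ × ℝ)) ((1 : ℝ), (0 : ℝ)) t :=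
    (hasDerivAt_id t).prodMk (hasDerivAt_const t x)
  have h : HasDerivAt (fun s => u s x) (fderiv ℝ (uncurry u) (t, x) (1, 0)) t := by
    have := ((hu.differentiable (by simp) (t, x)).hasFDerivAt).comp_hasDerivAt t hg
    exact this
  show deriv (fun s => u s x) t = _
  exact h.deriv

lemma smooth_px (hu : ContDiff ℝ (⊤ : ℕ∞) (uncurry u)) : ContDiff ℝ (⊤ : ℕ∞) (uncurry (px u)) := by
  have h : uncurry (px u) = fun p : ℝ × ℝ => fderiv ℝ (uncurry u) p (0, 1) :=
    funext fun p => px_eq_fderiv hu p.1 p.2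
  rw [h]
  exact (hu.fderiv_right (by simp)).clm_apply contDiff_const

lemma smooth_pt (hu : ContDiff ℝ (⊤ : ℕ∞) (uncurry u)) : ContDiff ℝ (⊤ : ℕ∞) (uncurry (pt u)) := by
  have h : uncurry (pt u) = fun p : ℝ × ℝ => fderiv ℝ (uncurry u) p (1, 0) :=
    funext fun p => pt_eq_fderiv hu p.1 p.2
  rw [h]
  exact (hu.fderiv_right (by simp)).clm_apply contDiff_const

lemma clairaut (hu : ContDiff ℝ (⊤ : ℕ∞) (uncurry u)) (t x : ℝ) :
    pt (px u) t x = px (pt u) t x := by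
  have hd2 : DifferentiableAt ℝ (fderiv ℝ (uncurry u)) (t, x) :=
    ((hu.fderiv_right (m := (⊤ : ℕ∞)) (by simp)).differentiable (by simp)) (t, x)
  have h1 : pt (px u) t x = fderiv ℝ (fderiv ℝ (uncurry u)) (t, x) (1, 0) (0, 1) := by
    rw [pt_eq_fderiv (smooth_px hu) t x,
      show uncurry (px u) = fun p : ℝ × ℝ => fderiv ℝ (uncurry u) p (0, 1) from
        funext fun p => px_eq_fderiv hu p.1 p.2,
      fderiv_clm_apply hd2 (differentiableAt_const _)]
    simp
  have h2 : px (pt u) t x = fderiv ℝ (fderiv ℝ (uncurry u)) (t, x) (0, 1) (1, 0) := by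
    rw [px_eq_fderiv (smooth_pt hu) t x,
      show uncurry (pt u) = fun p : ℝ × ℝ => fderiv ℝ (uncurry u) p (1, 0) from
        funext fun p => pt_eq_fderiv hu p.1 p.2,
      fderiv_clm_apply hd2 (differentiableAt_const _)]
    simp
  rw [h1, h2]
  exact second_derivative_symmetric
    (fun y => (hu.differentiable (by simp) y).hasFDerivAt) hd2.hasFDerivAt _ _

lemma deriv_zero_right {g : ℝ → ℝ} {t : ℝ} (hg : DifferentiableAt ℝ g t)
    (h0 : ∀ s ≥ t, g s = 0) : deriv g t = 0 := by
  have h1 : HasDerivWithinAt g (deriv g t) (Set.Ici t) t := hg.hasDerivAt.hasDerivWithinAt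
  have h2 : HasDerivWithinAt g 0 (Set.Ici t) t := by
    have hc : HasDerivWithinAt (fun _ : ℝ => (0 : ℝ)) 0 (Set.Ici t) t :=
      (hasDerivAt_const t (0 : ℝ)).hasDerivWithinAt
    exact hc.congr (fun s hs => h0 s hs) (h0 t le_rfl)
  have e1 := h1.derivWithin (uniqueDiffOn_Ici t t Set.self_mem_Ici)
  have e2 := h2.derivWithin (uniqueDiffOn_Ici t t Set.self_mem_Ici)
  rw [← e1, e2]

lemma hasDerivAt_int_sq (hu : ContDiff ℝ (⊤ : ℕ∞) (uncurry u)) (L t : ℝ) :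
    HasDerivAt (fun s => ∫ x in (0:ℝ)..L, (u s x) ^ 2)
      (∫ x in (0:ℝ)..L, 2 * u t x * pt u t x) t := by
  have hcont : Continuous fun p : ℝ × ℝ => 2 * u p.1 p.2 * pt u p.1 p.2 := by
    exact (continuous_const.mul hu.continuous).mul (smooth_pt hu).continuous
  obtain ⟨C, hC⟩ := ((isCompact_Icc (a := t - 1) (b := t + 1)).prod
    (isCompact_uIcc (a := (0:ℝ)) (b := L))).exists_bound_of_continuousOn hcont.continuousOn
  have key := (intervalIntegral.hasDerivAt_integral_of_dominated_loc_of_deriv_le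
    (F := fun s x => (u s x) ^ 2) (F' := fun s x => 2 * u s x * pt u s x)
    (x₀ := t) (a := 0) (b := L) (μ := volume) (bound := fun _ => C) (s := Metric.ball t 1)
    (Metric.ball_mem_nhds t one_pos)
    (Filter.Eventually.of_forall fun s =>
      ((cont_slice_x hu s).pow 2).aestronglyMeasurable)
    (((cont_slice_x hu t).pow 2).intervalIntegrable 0 L)
    (((continuous_const.mul (cont_slice_x hu t)).mul
      (cont_slice_x (smooth_pt hu) t)).aestronglyMeasurable)
    (Filter.Eventually.of_forall fun x hx s hs => by
      have hmem : ((s, x) : ℝ × ℝ) ∈ Set.Icc (t-1) (t+1) ×ˢ Set.uIcc (0:ℝ) L := by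
        constructor
        · have := Metric.mem_ball.1 hs
          rw [Real.dist_eq] at this
          constructor <;> [linarith [abs_le.1 this.le |>.1]; linarith [abs_le.1 this.le |>.2]]
        · exact Set.uIoc_subset_uIcc hx
      simpa using hC _ hmem)
    (intervalIntegrable_const)
    (Filter.Eventually.of_forall fun x hx s hs => by
      simpa using (hasDerivAt_pt hu s x).fun_pow 2)).2
  exact key

end Aux

/-- The free nonlinear extensible cantilever with the nonlinear, nonlocal free-end
boundary condition conserves its nonlinear energy. -/
theorem cantilever_nonlinear_energy_conservation (L D b₂ b₁ : ℝ)
    (hL : 0 < L) (hD : 0 < D) (hb₂ : 0 ≤ b₂)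
    (w : ℝ → ℝ → ℝ) (hw : ContDiff ℝ (⊤ : ℕ∞) (Function.uncurry w))
    (heq : ∀ t ≥ (0:ℝ), ∀ x ∈ Set.Icc (0:ℝ) L,
      pt (pt w) t x + D * px (px (px (px w))) t x
          + (b₁ - b₂ * ∫ y in (0:ℝ)..L, (px w t y) ^ 2) * px (px w) t x = 0)
    (hbc : ∀ t ≥ (0:ℝ), w t 0 = 0 ∧ px w t 0 = 0 ∧ px (px w) t L = 0 ∧
      D * px (px (px w)) t L
        + (b₁ - b₂ * ∫ y in (0:ℝ)..L, (px w t y) ^ 2) * px w t L = 0)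
    (En : ℝ → ℝ)
    (hEn : ∀ t, En t = (1/2) * (D * (∫ x in (0:ℝ)..L, (px (px w) t x) ^ 2)
        + ∫ x in (0:ℝ)..L, (pt w t x) ^ 2)
        + (b₂/4) * (∫ x in (0:ℝ)..L, (px w t x) ^ 2) ^ 2
        - (b₁/2) * (∫ x in (0:ℝ)..L, (px w t x) ^ 2)) :
    ∀ t ≥ (0:ℝ), En t = En 0 := by
  have hw1 : ContDiff ℝ (⊤ : ℕ∞) (Function.uncurry (px w)) := smooth_px hw
  have hw2 : ContDiff ℝ (⊤ : ℕ∞) (Function.uncurry (px (px w))) := smooth_px hw1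
  have hw3 : ContDiff ℝ (⊤ : ℕ∞) (Function.uncurry (px (px (px w)))) := smooth_px hw2
  have hw4 : ContDiff ℝ (⊤ : ℕ∞) (Function.uncurry (px (px (px (px w))))) := smooth_px hw3
  have hv : ContDiff ℝ (⊤ : ℕ∞) (Function.uncurry (pt w)) := smooth_pt hw
  have hv1 : ContDiff ℝ (⊤ : ℕ∞) (Function.uncurry (px (pt w))) := smooth_px hv
  have hv2 : ContDiff ℝ (⊤ : ℕ∞) (Function.uncurry (px (px (pt w)))) := smooth_px hv1
  have c1 : ∀ s x, pt (px w) s x = px (pt w) s x := fun s x => clairaut hw s x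
  have c2 : ∀ s x, pt (px (px w)) s x = px (px (pt w)) s x := by
    intro s x
    rw [clairaut hw1 s x]
    show deriv (fun y => pt (px w) s y) x = deriv (fun y => px (pt w) s y) x
    rw [funext (c1 s)]
  -- derivative of the energy
  have hA : ∀ s : ℝ, HasDerivAt (fun r => ∫ x in (0:ℝ)..L, (px (px w) r x) ^ 2)
      (∫ x in (0:ℝ)..L, 2 * px (px w) s x * pt (px (px w)) s x) s :=
    fun s => hasDerivAt_int_sq hw2 L s
  have hB : ∀ s : ℝ, HasDerivAt (fun r => ∫ x in (0:ℝ)..L, (pt w r x) ^ 2)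
      (∫ x in (0:ℝ)..L, 2 * pt w s x * pt (pt w) s x) s :=
    fun s => hasDerivAt_int_sq hv L s
  have hIt : ∀ s : ℝ, HasDerivAt (fun r => ∫ x in (0:ℝ)..L, (px w r x) ^ 2)
      (∫ x in (0:ℝ)..L, 2 * px w s x * pt (px w) s x) s :=
    fun s => hasDerivAt_int_sq hw1 L s
  have hE : ∀ s : ℝ, HasDerivAt En
      ((1/2) * (D * (∫ x in (0:ℝ)..L, 2 * px (px w) s x * pt (px (px w)) s x)
        + ∫ x in (0:ℝ)..L, 2 * pt w s x * pt (pt w) s x)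
      + (b₂/4) * ((∫ x in (0:ℝ)..L, 2 * px w s x * pt (px w) s x)
            * (∫ x in (0:ℝ)..L, (px w s x) ^ 2)
          + (∫ x in (0:ℝ)..L, (px w s x) ^ 2)
            * (∫ x in (0:ℝ)..L, 2 * px w s x * pt (px w) s x))
      - (b₁/2) * (∫ x in (0:ℝ)..L, 2 * px w s x * pt (px w) s x)) s := by
    intro s
    have hEnf : En = fun r => (1/2) * (D * (∫ x in (0:ℝ)..L, (px (px w) r x) ^ 2)
        + ∫ x in (0:ℝ)..L, (pt w r x) ^ 2)
        + (b₂/4) * ((∫ x in (0:ℝ)..L, (px w r x) ^ 2) * (∫ x in (0:ℝ)..L, (px w r x) ^ 2))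
        - (b₁/2) * (∫ x in (0:ℝ)..L, (px w r x) ^ 2) := by
      funext r
      rw [hEn r]
      ring
    rw [hEnf]
    exact ((((hA s).const_mul D).add (hB s)).const_mul (1/2)).add
      (((hIt s).mul (hIt s)).const_mul (b₂/4)) |>.sub ((hIt s).const_mul (b₁/2))
  -- the derivative vanishes for s ≥ 0
  have hzero : ∀ s ≥ (0:ℝ),
      ((1/2) * (D * (∫ x in (0:ℝ)..L, 2 * px (px w) s x * pt (px (px w)) s x)
        + ∫ x in (0:ℝ)..L, 2 * pt w s x * pt (pt w) s x)
      + (b₂/4) * ((∫ x in (0:ℝ)..L, 2 * px w s x * pt (px w) s x)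
            * (∫ x in (0:ℝ)..L, (px w s x) ^ 2)
          + (∫ x in (0:ℝ)..L, (px w s x) ^ 2)
            * (∫ x in (0:ℝ)..L, 2 * px w s x * pt (px w) s x))
      - (b₁/2) * (∫ x in (0:ℝ)..L, 2 * px w s x * pt (px w) s x)) = 0 := by
    intro s hs
    obtain ⟨bc1, bc2, bc3, bc4⟩ := hbc s hs
    have hv0 : pt w s 0 = 0 :=
      deriv_zero_right (slice_t_diff hw s 0) (fun r hr => (hbc r (le_trans hs hr)).1)
    have hvx0 : px (pt w) s 0 = 0 := by
      rw [← c1]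
      exact deriv_zero_right (slice_t_diff hw1 s 0) (fun r hr => (hbc r (le_trans hs hr)).2.1)
    have ibp1 : ∫ x in (0:ℝ)..L, px (px w) s x * px (px (pt w)) s x
        = px (px w) s L * px (pt w) s L - px (px w) s 0 * px (pt w) s 0
          - ∫ x in (0:ℝ)..L, px (px (px w)) s x * px (pt w) s x :=
      integral_mul_deriv_eq_deriv_mul
        (fun x _ => hasDerivAt_px hw2 s x) (fun x _ => hasDerivAt_px hv1 s x)
        ((cont_slice_x hw3 s).intervalIntegrable 0 L)
        ((cont_slice_x hv2 s).intervalIntegrable 0 L)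
    have ibp2 : ∫ x in (0:ℝ)..L, px (px (px w)) s x * px (pt w) s x
        = px (px (px w)) s L * pt w s L - px (px (px w)) s 0 * pt w s 0
          - ∫ x in (0:ℝ)..L, px (px (px (px w))) s x * pt w s x :=
      integral_mul_deriv_eq_deriv_mul
        (fun x _ => hasDerivAt_px hw3 s x) (fun x _ => hasDerivAt_px hv s x)
        ((cont_slice_x hw4 s).intervalIntegrable 0 L)
        ((cont_slice_x hv1 s).intervalIntegrable 0 L)
    have ibp3 : ∫ x in (0:ℝ)..L, px w s x * px (pt w) s x
        = px w s L * pt w s L - px w s 0 * pt w s 0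
          - ∫ x in (0:ℝ)..L, px (px w) s x * pt w s x :=
      integral_mul_deriv_eq_deriv_mul
        (fun x _ => hasDerivAt_px hw1 s x) (fun x _ => hasDerivAt_px hv s x)
        ((cont_slice_x hw2 s).intervalIntegrable 0 L)
        ((cont_slice_x hv1 s).intervalIntegrable 0 L)
    have i1 : IntervalIntegrable
        (fun x => (-D) * (px (px (px (px w))) s x * pt w s x)) volume 0 L :=
      (continuous_const.mul ((cont_slice_x hw4 s).mul (cont_slice_x hv s))).intervalIntegrable 0 L
    have i2 : IntervalIntegrable
        (fun x => (-(b₁ - b₂ * ∫ y in (0:ℝ)..L, (px w s y) ^ 2))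
          * (px (px w) s x * pt w s x)) volume 0 L :=
      (continuous_const.mul ((cont_slice_x hw2 s).mul (cont_slice_x hv s))).intervalIntegrable 0 L
    have hk : ∫ x in (0:ℝ)..L, pt w s x * pt (pt w) s x
        = (-D) * (∫ x in (0:ℝ)..L, px (px (px (px w))) s x * pt w s x)
          + (-(b₁ - b₂ * ∫ y in (0:ℝ)..L, (px w s y) ^ 2))
            * (∫ x in (0:ℝ)..L, px (px w) s x * pt w s x) := by
      rw [← intervalIntegral.integral_const_mul, ← intervalIntegral.integral_const_mul, ← integral_add i1 i2]
      apply integral_congr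
      intro x hx
      have hx' : x ∈ Set.Icc (0:ℝ) L := by rwa [Set.uIcc_of_le hL.le] at hx
      have hpde := heq s hs x hx'
      linear_combination (pt w s x) * hpde
    have hA' : ∫ x in (0:ℝ)..L, 2 * px (px w) s x * pt (px (px w)) s x
        = 2 * ∫ x in (0:ℝ)..L, px (px w) s x * px (px (pt w)) s x := by
      rw [← intervalIntegral.integral_const_mul]
      apply integral_congr
      intro x _
      simp only [c2]; ring
    have hB' : ∫ x in (0:ℝ)..L, 2 * pt w s x * pt (pt w) s x
        = 2 * ∫ x in (0:ℝ)..L, pt w s x * pt (pt w) s x := by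
      rw [← intervalIntegral.integral_const_mul]
      apply integral_congr
      intro x _
      ring
    have hI' : ∫ x in (0:ℝ)..L, 2 * px w s x * pt (px w) s x
        = 2 * ∫ x in (0:ℝ)..L, px w s x * px (pt w) s x := by
      rw [← intervalIntegral.integral_const_mul]
      apply integral_congr
      intro x _
      simp only [c1]; ring
    rw [hA', hB', hI', ibp1, ibp2, ibp3, hk, bc2, bc3, hv0, hvx0]
    linear_combination (-(pt w s L)) * bc4
  -- conclude
  intro t ht
  have hcont : ContinuousOn En (Set.Icc 0 t) :=
    fun r _ => ((hE r).continuousAt).continuousWithinAt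
  have hconst := constant_of_has_deriv_right_zero hcont (fun r hr => by
    have h := hE r
    rw [hzero r hr.1] at h
    exact h.hasDerivWithinAt)
  exact hconst t ⟨ht, le_rfl⟩
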